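/- arXiv:2102.04083 — 2 statements merged into one kernel-verified Lean document; each statement's English description precedes it below -/
import Mathlib

section
/- Let (X, m) be a probability space and T a Markov operator on L²(m) (positive, T1 = 1, contraction) whose restriction to L²₀(m) has spectral radius ρ < 1. Then for every f ∈ L²(m), Tⁿf → ∫f dm m-almost everywhere as n → ∞. -/
open MeasureTheory Filter Topology
open scoped ENNReal

/-!
Write `f = f₀ + c` with `c = ∫ f dm` and `∫ f₀ dm = 0`. Since `T` fixes constants,
`Tⁿ f = Tⁿ f₀ + c`, and the spectral gap gives `‖Tⁿ f₀‖₂ ≤ αⁿ ‖f₀‖₂` for large `n` and some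
`α < 1`. The `L²` norms of `Tⁿ f₀` are therefore summable, which forces `∑ₙ |Tⁿ f₀ (x)| < ∞`,
hence `Tⁿ f₀ (x) → 0`, for `m`-almost every `x`.
-/

namespace MeasureTheory.Lp

variable {X E : Type*} [MeasurableSpace X] {μ : Measure X} [NormedAddCommGroup E] {p : ℝ≥0∞}

theorem ae_tendsto_zero_of_summable_norm [Fact (1 ≤ p)] {g : ℕ → Lp E p μ}
    (hg : Summable fun n => ‖g n‖) : ∀ᵐ x ∂μ, Tendsto (fun n => g n x) atTop (𝓝 0) := by
  have hsum : ∑' n, eLpNorm (g n) p μ ≠ ∞ := by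
    simpa only [Lp.enorm_def] using tsum_enorm_ne_top_iff_summable_norm.2 hg
  filter_upwards [summable_norm_of_tsum_eLpNorm_ne_top Fact.out
    (fun n => Lp.aestronglyMeasurable (g n)) hsum] with x hx
  exact tendsto_zero_iff_norm_tendsto_zero.2 hx.tendsto_atTop_zero

variable [IsFiniteMeasure μ]

theorem coeFn_add_const (g : Lp E p μ) (c : E) :
    ⇑(g + Lp.const p μ c) =ᵐ[μ] fun x => g x + c := by
  filter_upwards [Lp.coeFn_add g (Lp.const p μ c), Lp.coeFn_const p μ c] with x hadd hconst
  rw [hadd, Pi.add_apply, hconst, Function.const_apply]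

variable [NormedSpace ℝ E] [CompleteSpace E]

theorem integral_coeFn_const (c : E) : ∫ x, Lp.const p μ c x ∂μ = μ.real Set.univ • c := by
  rw [integral_congr_ae (Lp.coeFn_const p μ c)]
  exact integral_const c

theorem integral_coeFn_sub_const (hp : 1 ≤ p) (f : Lp E p μ) (c : E) :
    ∫ x, (f - Lp.const p μ c) x ∂μ = ∫ x, f x ∂μ - μ.real Set.univ • c := by
  rw [integral_congr_ae (Lp.coeFn_sub f _),
    integral_sub' ((Lp.memLp f).integrable hp) ((Lp.memLp _).integrable hp),
    integral_coeFn_const]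

end MeasureTheory.Lp

theorem tendsto_ae_of_spectral_gap_general
    {X : Type*} [MeasurableSpace X] (m : Measure X) [IsProbabilityMeasure m]
    (T : Lp ℝ 2 m →L[ℝ] Lp ℝ 2 m)
    -- `T 1 = 1`
    (hconst : T ((memLp_const (1 : ℝ)).toLp fun _ => (1 : ℝ)) =
      (memLp_const (1 : ℝ)).toLp fun _ => (1 : ℝ))
    (ρ : ℝ) (hρ0 : 0 ≤ ρ) (hρ1 : ρ < 1)
    -- the restriction of `T` to `L²₀(m)` has spectral radius `ρ`:
    -- for every `α ∈ (ρ, 1)`, eventually `‖Tⁿ|_{L²₀}‖ ≤ αⁿ`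
    (hspec : ∀ α : ℝ, ρ < α → α < 1 → ∃ N : ℕ, ∀ n ≥ N, ∀ g : Lp ℝ 2 m,
      (∫ x, g x ∂m) = 0 → ‖(T ^ n) g‖ ≤ α ^ n * ‖g‖)
    (f : Lp ℝ 2 m) :
    ∀ᵐ x ∂m, Tendsto (fun n : ℕ => (T ^ n) f x) atTop (nhds (∫ y, f y ∂m)) := by
  set c := ∫ y, f y ∂m
  set f₀ := f - Lp.const 2 m c
  have hf₀ : ∫ x, f₀ x ∂m = 0 := by
    rw [Lp.integral_coeFn_sub_const one_le_two, probReal_univ, one_smul, sub_self]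
  have hfix (n : ℕ) : (T ^ n) (Lp.const 2 m c) = Lp.const 2 m c := by
    have hone : Function.IsFixedPt T (Lp.const 2 m (1 : ℝ)) := hconst
    have hc : Lp.const 2 m c = c • Lp.const 2 m (1 : ℝ) := by
      simpa using (Lp.constₗ 2 m ℝ).map_smul c (1 : ℝ)
    rw [hc, map_smul, FunLike.coe_pow_eq_iterate, hone.iterate n]
  obtain ⟨α, hρα, hα1⟩ := exists_between hρ1
  obtain ⟨N, hN⟩ := hspec α hρα hα1
  have hsum : Summable fun n => ‖(T ^ n) f₀‖ :=
    .of_norm_bounded_eventually_nat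
      ((summable_geometric_of_lt_one (hρ0.trans hρα.le) hα1).mul_right ‖f₀‖)
      (eventually_atTop.2 ⟨N, fun n hn => (norm_norm _).trans_le (hN n hn f₀ hf₀)⟩)
  have hdecomp : ∀ᵐ x ∂m, ∀ n, (T ^ n) f x = (T ^ n) f₀ x + c := by
    refine ae_all_iff.2 fun n => ?_
    rw [← sub_add_cancel f (Lp.const 2 m c), map_add, hfix]
    exact Lp.coeFn_add_const _ c
  filter_upwards [Lp.ae_tendsto_zero_of_summable_norm hsum, hdecomp] with x hx₀ hx
  simpa only [hx, zero_add] using hx₀.add_const c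

/-- If a Markov operator `T` on `L²(m)` of a probability space has spectral
radius `ρ < 1` on the mean-zero subspace `L²₀(m)`, then `Tⁿf → ∫ f dm`
`m`-almost everywhere for every `f ∈ L²(m)`. -/
theorem tendsto_ae_of_spectral_gap
    {X : Type*} [MeasurableSpace X] (m : Measure X) [IsProbabilityMeasure m]
    (T : Lp ℝ 2 m →L[ℝ] Lp ℝ 2 m)
    -- positivity
    (hpos : ∀ g : Lp ℝ 2 m, 0 ≤ᵐ[m] ⇑g → 0 ≤ᵐ[m] ⇑(T g))
    -- `T 1 = 1`
    (hconst : T ((memLp_const (1 : ℝ)).toLp fun _ => (1 : ℝ)) =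
      (memLp_const (1 : ℝ)).toLp fun _ => (1 : ℝ))
    -- contraction
    (hcontr : ∀ g : Lp ℝ 2 m, ‖T g‖ ≤ ‖g‖)
    -- `T` preserves `L²₀(m)`
    (hzero : ∀ g : Lp ℝ 2 m, (∫ x, g x ∂m) = 0 → (∫ x, (T g) x ∂m) = 0)
    (ρ : ℝ) (hρ0 : 0 ≤ ρ) (hρ1 : ρ < 1)
    -- the restriction of `T` to `L²₀(m)` has spectral radius `ρ`:
    -- for every `α ∈ (ρ, 1)`, eventually `‖Tⁿ|_{L²₀}‖ ≤ αⁿ`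
    (hspec : ∀ α : ℝ, ρ < α → α < 1 → ∃ N : ℕ, ∀ n ≥ N, ∀ g : Lp ℝ 2 m,
      (∫ x, g x ∂m) = 0 → ‖(T ^ n) g‖ ≤ α ^ n * ‖g‖)
    (f : Lp ℝ 2 m) :
    ∀ᵐ x ∂m, Tendsto (fun n : ℕ => (T ^ n) f x) atTop (nhds (∫ y, f y ∂m)) :=
  tendsto_ae_of_spectral_gap_general m T hconst ρ hρ0 hρ1 hspec f
end

section
/- Let (X, m) be a probability space and T a Markov operator on L²(m) whose restriction to L²₀(m) has spectral radius ρ < 1. Then for every f ∈ L²(m), for m-almost every x, limsup_{n→∞} |Tⁿf(x) − ∫f dm|^{1/n} ≤ ρ^{1/2}. -/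
/-!
Write `f = g + c` with `c = ∫ f dm`. Since `T` fixes constants, `Tⁿf - c = Tⁿg`, and `g` has mean
zero, so `‖Tⁿg‖₂ ≤ C αⁿ` for every `α ∈ (ρ, 1)`. For `t > α`, Markov's inequality bounds the measure
of `{|Tⁿg| ≥ tⁿ}` by `(C αⁿ / tⁿ)²`, which is summable, so by Borel–Cantelli almost every `x` has
`|Tⁿg(x)| < tⁿ` for all large `n`. Letting `t ↓ ρ` along a sequence gives
`limsup |Tⁿg(x)|^{1/n} ≤ ρ ≤ √ρ` almost everywhere.
-/

open MeasureTheory Filter Topology Asymptotics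
open scoped ENNReal

theorem Real.limsup_rpow_one_div_le_of_eventually_le_pow {a : ℕ → ℝ} {t : ℝ} (ha : ∀ n, 0 ≤ a n)
    (ht : 0 ≤ t) (h : ∀ᶠ n in atTop, a n ≤ t ^ n) :
    limsup (fun n : ℕ => a n ^ ((1 : ℝ) / n)) atTop ≤ t := by
  refine limsup_le_of_le (isCoboundedUnder_le_of_le atTop fun n => Real.rpow_nonneg (ha n) _) ?_
  filter_upwards [h, eventually_ne_atTop 0] with n hn hn0
  calc a n ^ ((1 : ℝ) / n) ≤ (t ^ n) ^ ((1 : ℝ) / n) := by gcongr; exact ha n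
    _ = t := by rw [one_div, Real.pow_rpow_inv_natCast ht hn0]

namespace MeasureTheory.Lp

variable {X E : Type*} [MeasurableSpace X] [NormedAddCommGroup E] {μ : Measure X} {p : ℝ≥0∞}

theorem ae_eventually_norm_lt_pow (hp0 : p ≠ 0) (hp : p ≠ ∞) {u : ℕ → Lp E p μ} {α t : ℝ}
    (hα : 0 ≤ α) (hαt : α < t) (hu : u =O[atTop] (α ^ ·)) :
    ∀ᵐ x ∂μ, ∀ᶠ n in atTop, ‖u n x‖ < t ^ n := by
  have ht : 0 < t := hα.trans_lt hαt
  have htn : ∀ n : ℕ, 0 < t ^ n := fun n => pow_pos ht n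
  have hnorm : ∀ n, 0 ≤ ‖u n‖ := fun n => ENNReal.toReal_nonneg
  have hratio : ∀ n, 0 ≤ ‖u n‖ / t ^ n := fun n => div_nonneg (hnorm n) (htn n).le
  have hq : 0 < p.toReal := ENNReal.toReal_pos hp0 hp
  have hmeas : ∀ n, μ {x | ENNReal.ofReal (t ^ n) ≤ ‖u n x‖₊} ≤
      ENNReal.ofReal ((‖u n‖ / t ^ n) ^ p.toReal) := fun n => by
    refine (meas_ge_le_mul_pow_enorm (u n) hp0 hp (ENNReal.ofReal_pos.2 (htn n)).ne').trans_eq ?_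
    rw [← ENNReal.ofReal_inv_of_pos (htn n), ENNReal.ofReal_rpow_of_pos (inv_pos.2 (htn n)),
      ENNReal.ofReal_rpow_of_nonneg (hnorm n) hq.le, ← ENNReal.ofReal_mul (by positivity),
      ← Real.mul_rpow (inv_pos.2 (htn n)).le (hnorm n), inv_mul_eq_div]
  obtain ⟨c, hc, hcu⟩ := hu.exists_pos
  have hsum : Summable fun n => (‖u n‖ / t ^ n) ^ p.toReal := by
    have hr : (α / t) ^ p.toReal < 1 :=
      Real.rpow_lt_one (div_nonneg hα ht.le) ((div_lt_one ht).2 hαt) hq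
    refine ((summable_geometric_of_lt_one (by positivity) hr).mul_left (c ^ p.toReal))
      |>.of_norm_bounded_eventually_nat ?_
    filter_upwards [hcu.bound] with n hn
    rw [norm_pow, Real.norm_of_nonneg hα] at hn
    rw [Real.norm_of_nonneg (Real.rpow_nonneg (hratio n) _),
      Real.rpow_pow_comm (div_nonneg hα ht.le), div_pow,
      ← Real.mul_rpow hc.le (div_nonneg (pow_nonneg hα n) (htn n).le), mul_div_assoc']
    gcongr
    exact hratio n
  have htsum : ∑' n, μ {x | ENNReal.ofReal (t ^ n) ≤ ‖u n x‖₊} ≠ ∞ := by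
    refine ne_top_of_le_ne_top ?_ (ENNReal.tsum_le_tsum hmeas)
    rw [← ENNReal.ofReal_tsum_of_nonneg (fun n => Real.rpow_nonneg (hratio n) _) hsum]
    exact ENNReal.ofReal_ne_top
  filter_upwards [ae_eventually_notMem htsum] with x hx
  filter_upwards [hx] with n hn
  simpa [ENNReal.ofReal_le_iff_le_toReal] using hn

theorem ae_limsup_norm_rpow_one_div_le (hp0 : p ≠ 0) (hp : p ≠ ∞) {u : ℕ → Lp E p μ} {r : ℝ}
    (hr : 0 ≤ r) (hu : ∀ᶠ α in 𝓝[>] r, u =O[atTop] (α ^ ·)) :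
    ∀ᵐ x ∂μ, limsup (fun n : ℕ => ‖u n x‖ ^ ((1 : ℝ) / n)) atTop ≤ r := by
  have hle : ∀ t, r < t → ∀ᵐ x ∂μ, limsup (fun n : ℕ => ‖u n x‖ ^ ((1 : ℝ) / n)) atTop ≤ t := by
    intro t hrt
    obtain ⟨α, hαu, hrα, hαt⟩ := (hu.and (Ioo_mem_nhdsGT hrt)).exists
    filter_upwards [ae_eventually_norm_lt_pow hp0 hp (hr.trans hrα.le) hαt hαu] with x hx
    exact Real.limsup_rpow_one_div_le_of_eventually_le_pow (fun n => norm_nonneg _)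
      (hr.trans (hrα.trans hαt).le) (hx.mono fun n => le_of_lt)
  obtain ⟨t, -, hrt, ht⟩ := exists_seq_strictAnti_tendsto r
  filter_upwards [ae_all_iff.2 fun k => hle (t k) (hrt k)] with x hx
  exact ge_of_tendsto' ht hx

theorem coeFn_sub_const [IsFiniteMeasure μ] (f : Lp ℝ p μ) (c : ℝ) :
    ⇑(f - Lp.const p μ c) =ᵐ[μ] fun x => f x - c := by
  filter_upwards [Lp.coeFn_sub f (Lp.const p μ c), Lp.coeFn_const p μ c] with x h1 h2
  rw [h1, Pi.sub_apply, h2]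
  rfl

theorem integral_sub_const_integral [IsProbabilityMeasure μ] [Fact (1 ≤ p)] (f : Lp ℝ p μ) :
    ∫ x, (f - Lp.const p μ (∫ y, f y ∂μ)) x ∂μ = 0 := by
  rw [integral_congr_ae (coeFn_sub_const f _),
    integral_sub ((Lp.memLp f).integrable Fact.out) (integrable_const _)]
  simp

section

variable [IsFiniteMeasure μ] [Fact (1 ≤ p)] {T : Lp ℝ p μ →L[ℝ] Lp ℝ p μ}

theorem pow_apply_const (hT : T (Lp.const p μ 1) = Lp.const p μ 1) (n : ℕ) (c : ℝ) :
    (T ^ n) (Lp.const p μ c) = Lp.const p μ c := by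
  have hc : Lp.const p μ c = c • Lp.const p μ 1 := by
    conv_lhs => rw [← mul_one c, ← smul_eq_mul]
    exact (Lp.constₗ p μ ℝ).map_smul c 1
  induction n with
  | zero => rfl
  | succ n ih => rw [pow_succ, mul_apply_eq_comp, hc, map_smul, hT, ← hc, ih]

theorem ae_pow_apply_sub_const (hT : T (Lp.const p μ 1) = Lp.const p μ 1)
    (f : Lp ℝ p μ) (c : ℝ) :
    ∀ᵐ x ∂μ, ∀ n : ℕ, (T ^ n) (f - Lp.const p μ c) x = (T ^ n) f x - c := by
  refine ae_all_iff.2 fun n => ?_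
  rw [map_sub, pow_apply_const hT]
  exact coeFn_sub_const _ c

end

end MeasureTheory.Lp

theorem limsup_rpow_le_sqrt_spectral_radius_general
    {X : Type*} [MeasurableSpace X] (m : Measure X) [IsProbabilityMeasure m]
    (T : Lp ℝ 2 m →L[ℝ] Lp ℝ 2 m)
    -- `T 1 = 1`
    (hconst : T ((memLp_const (1 : ℝ)).toLp fun _ => (1 : ℝ)) =
      (memLp_const (1 : ℝ)).toLp fun _ => (1 : ℝ))
    (ρ : ℝ) (hρ0 : 0 ≤ ρ) (hρ1 : ρ < 1)
    -- the restriction of `T` to `L²₀(m)` has spectral radius `ρ`: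
    -- for every `α ∈ (ρ, 1)`, eventually `‖Tⁿ|_{L²₀}‖ ≤ αⁿ`
    (hspec : ∀ α : ℝ, ρ < α → α < 1 → ∃ N : ℕ, ∀ n ≥ N, ∀ g : Lp ℝ 2 m,
      (∫ x, g x ∂m) = 0 → ‖(T ^ n) g‖ ≤ α ^ n * ‖g‖)
    (f : Lp ℝ 2 m) :
    ∀ᵐ x ∂m,
      Filter.limsup
          (fun n : ℕ => |(T ^ n) f x - ∫ y, f y ∂m| ^ ((1 : ℝ) / n)) atTop ≤
        Real.sqrt ρ := by
  set g := f - Lp.const 2 m (∫ y, f y ∂m)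
  have hg : ∫ x, g x ∂m = 0 := Lp.integral_sub_const_integral f
  have hdecay : ∀ᶠ α in 𝓝[>] ρ, (fun n => (T ^ n) g) =O[atTop] (α ^ ·) := by
    filter_upwards [Ioo_mem_nhdsGT hρ1] with α ⟨hρα, hα1⟩
    obtain ⟨N, hN⟩ := hspec α hρα hα1
    refine IsBigO.of_bound ‖g‖ (eventually_atTop.2 ⟨N, fun n hn => ?_⟩)
    rw [norm_pow, Real.norm_of_nonneg (hρ0.trans hρα.le), mul_comm]
    exact hN n hn g hg
  filter_upwards [Lp.ae_limsup_norm_rpow_one_div_le two_ne_zero ENNReal.ofNat_ne_top hρ0 hdecay,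
    Lp.ae_pow_apply_sub_const hconst f (∫ y, f y ∂m)] with x hlimsup hcenter
  simp_rw [← hcenter, ← Real.norm_eq_abs]
  exact hlimsup.trans ((Real.le_sqrt hρ0 hρ0).2 (by nlinarith))

/-- If a Markov operator `T` on `L²(m)` of a probability space has spectral
radius `ρ < 1` on the mean-zero subspace `L²₀(m)`, then for `m`-almost every `x`,
`limsup |Tⁿf(x) − ∫ f dm|^{1/n} ≤ ρ^{1/2}`. -/
theorem limsup_rpow_le_sqrt_spectral_radius
    {X : Type*} [MeasurableSpace X] (m : Measure X) [IsProbabilityMeasure m]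
    (T : Lp ℝ 2 m →L[ℝ] Lp ℝ 2 m)
    -- positivity
    (hpos : ∀ g : Lp ℝ 2 m, 0 ≤ᵐ[m] ⇑g → 0 ≤ᵐ[m] ⇑(T g))
    -- `T 1 = 1`
    (hconst : T ((memLp_const (1 : ℝ)).toLp fun _ => (1 : ℝ)) =
      (memLp_const (1 : ℝ)).toLp fun _ => (1 : ℝ))
    -- contraction
    (hcontr : ∀ g : Lp ℝ 2 m, ‖T g‖ ≤ ‖g‖)
    -- `T` preserves `L²₀(m)`
    (hzero : ∀ g : Lp ℝ 2 m, (∫ x, g x ∂m) = 0 → (∫ x, (T g) x ∂m) = 0)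
    (ρ : ℝ) (hρ0 : 0 ≤ ρ) (hρ1 : ρ < 1)
    -- the restriction of `T` to `L²₀(m)` has spectral radius `ρ`:
    -- for every `α ∈ (ρ, 1)`, eventually `‖Tⁿ|_{L²₀}‖ ≤ αⁿ`
    (hspec : ∀ α : ℝ, ρ < α → α < 1 → ∃ N : ℕ, ∀ n ≥ N, ∀ g : Lp ℝ 2 m,
      (∫ x, g x ∂m) = 0 → ‖(T ^ n) g‖ ≤ α ^ n * ‖g‖)
    (f : Lp ℝ 2 m) :
    ∀ᵐ x ∂m,
      Filter.limsup
          (fun n : ℕ => |(T ^ n) f x - ∫ y, f y ∂m| ^ ((1 : ℝ) / n)) atTop ≤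
        Real.sqrt ρ :=
  limsup_rpow_le_sqrt_spectral_radius_general m T hconst ρ hρ0 hρ1 hspec f
end
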